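/- arXiv:2004.00782 — 4 statements merged into one kernel-verified Lean document; each statement's English description precedes it below -/
import Mathlib

section
/- Let Ω and Ω' be open subsets of ℂ, let ξ : Ω → ℂ be real-differentiable at a point z ∈ Ω with ξ(z) ∈ Ω', and let h : Ω' → ℂ be real-differentiable at w = ξ(z). Then the composition H = h ∘ ξ is real-differentiable at z and satisfies the pointwise identity |H_z(z)|² + |H_z̄(z)|² = (|h_z(w)|² + |h_z̄(w)|²)·(|ξ_z(z)|² + |ξ_z̄(z)|²) + 4·Re( h_z(w)·conj(h_z̄(w))·ξ_z(z)·ξ_z̄(z) ). -/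
/-! Every ℝ-linear map `ℂ → ℂ` has the form `v ↦ A v + B v̄`, which turns the chain rule for
real derivatives into the Wirtinger chain rule `H_z = h_w ξ_z + h_w̄ conj ξ_z̄`,
`H_z̄ = h_w ξ_z̄ + h_w̄ conj ξ_z`. Expanding the squared moduli, the two cross terms are equal
and add up to `4 Re(h_w conj h_w̄ ξ_z ξ_z̄)`. -/

open Complex MeasureTheory Set

/-- Wirtinger derivative `∂f/∂z` via the real Fréchet derivative. -/
noncomputable def wdz (f : ℂ → ℂ) (z : ℂ) : ℂ :=
  (1 / 2 : ℂ) * (fderiv ℝ f z 1 - Complex.I * fderiv ℝ f z Complex.I)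

/-- Wirtinger derivative `∂f/∂z̄` via the real Fréchet derivative. -/
noncomputable def wdzbar (f : ℂ → ℂ) (z : ℂ) : ℂ :=
  (1 / 2 : ℂ) * (fderiv ℝ f z 1 + Complex.I * fderiv ℝ f z Complex.I)

/-- Dirichlet energy of `f` on `Ω`. -/
noncomputable def energy (Ω : Set ℂ) (f : ℂ → ℂ) : ℝ :=
  ∫ z in Ω, ((‖wdz f z‖) ^ 2 + (‖wdzbar f z‖) ^ 2)

/-- A test function on `Ω`: smooth with compact support contained in `Ω`. -/
def IsTestFunction (Ω : Set ℂ) (η : ℂ → ℂ) : Prop :=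
  ContDiff ℝ (⊤ : ℕ∞) η ∧ IsCompact (tsupport η) ∧ tsupport η ⊆ Ω

/-- An admissible change of variables of `Ω`: a `C¹` diffeomorphism of `Ω` onto itself
with everywhere positive Jacobian, equal to the identity outside a compact subset of `Ω`. -/
structure IsAdmissibleChange (Ω : Set ℂ) (ξ : ℂ → ℂ) : Prop where
  contDiffOn : ContDiffOn ℝ 1 ξ Ω
  bijOn : Set.BijOn ξ Ω Ω
  jac_pos : ∀ z ∈ Ω, (‖wdz ξ z‖) ^ 2 - (‖wdzbar ξ z‖) ^ 2 > 0
  eq_id : ∃ K : Set ℂ, IsCompact K ∧ K ⊆ Ω ∧ ∀ z ∉ K, ξ z = z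

/-- `h` is Hopf harmonic on `Ω`: `h` is `C¹` and its Hopf product is holomorphic on `Ω`. -/
def IsHopfHarmonic (Ω : Set ℂ) (h : ℂ → ℂ) : Prop :=
  ContDiffOn ℝ 1 h Ω ∧
    DifferentiableOn ℂ (fun z => wdz h z * (starRingEnd ℂ) (wdzbar h z)) Ω

open ComplexConjugate

theorem ContinuousLinearMap.complex_apply_eq_mul_add_mul_conj (L : ℂ →L[ℝ] ℂ) (v : ℂ) :
    L v = (1 / 2 : ℂ) * (L 1 - I * L I) * v + (1 / 2 : ℂ) * (L 1 + I * L I) * conj v := by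
  have hv : v = v.re • (1 : ℂ) + v.im • I := by simp [real_smul, re_add_im]
  rw [hv, map_add, L.map_smul, L.map_smul]
  simp only [real_smul, map_add, map_mul, conj_ofReal, map_one, conj_I]
  ring_nf
  simp only [I_sq]
  ring

theorem fderiv_apply_eq_wdz_mul_add_wdzbar_mul_conj (f : ℂ → ℂ) (z v : ℂ) :
    fderiv ℝ f z v = wdz f z * v + wdzbar f z * conj v :=
  (fderiv ℝ f z).complex_apply_eq_mul_add_mul_conj v

theorem wdz_comp {ξ h : ℂ → ℂ} {z : ℂ} (hξ : DifferentiableAt ℝ ξ z)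
    (hh : DifferentiableAt ℝ h (ξ z)) :
    wdz (h ∘ ξ) z = wdz h (ξ z) * wdz ξ z + wdzbar h (ξ z) * conj (wdzbar ξ z) := by
  rw [wdz, fderiv_comp z hh hξ]
  simp only [ContinuousLinearMap.comp_apply, fderiv_apply_eq_wdz_mul_add_wdzbar_mul_conj,
    map_add, map_mul, map_one, conj_I, map_neg]
  ring_nf
  simp only [I_sq]
  ring

theorem wdzbar_comp {ξ h : ℂ → ℂ} {z : ℂ} (hξ : DifferentiableAt ℝ ξ z)
    (hh : DifferentiableAt ℝ h (ξ z)) :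
    wdzbar (h ∘ ξ) z = wdz h (ξ z) * wdzbar ξ z + wdzbar h (ξ z) * conj (wdz ξ z) := by
  rw [wdzbar, fderiv_comp z hh hξ]
  simp only [ContinuousLinearMap.comp_apply, fderiv_apply_eq_wdz_mul_add_wdzbar_mul_conj,
    map_add, map_mul, map_one, conj_I, map_neg]
  ring_nf
  simp only [I_sq]
  ring

theorem Complex.sq_norm_mul_add_mul_conj_pair (a b c d : ℂ) :
    ‖a * c + b * conj d‖ ^ 2 + ‖a * d + b * conj c‖ ^ 2 =
      (‖a‖ ^ 2 + ‖b‖ ^ 2) * (‖c‖ ^ 2 + ‖d‖ ^ 2) + 4 * (a * conj b * c * d).re := by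
  simp only [Complex.sq_norm, normSq_apply, mul_re, mul_im,
    add_re, add_im, conj_re, conj_im]
  ring

theorem stmt_0_general
    (ξ h : ℂ → ℂ) (z : ℂ)
    (hξ : DifferentiableAt ℝ ξ z) (hh : DifferentiableAt ℝ h (ξ z)) :
    DifferentiableAt ℝ (h ∘ ξ) z ∧
    (‖wdz (h ∘ ξ) z‖) ^ 2 + (‖wdzbar (h ∘ ξ) z‖) ^ 2 =
      ((‖wdz h (ξ z)‖) ^ 2 + (‖wdzbar h (ξ z)‖) ^ 2) *
        ((‖wdz ξ z‖) ^ 2 + (‖wdzbar ξ z‖) ^ 2) +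
      4 * (wdz h (ξ z) * (starRingEnd ℂ) (wdzbar h (ξ z)) * wdz ξ z * wdzbar ξ z).re := by
  refine ⟨hh.comp z hξ, ?_⟩
  rw [wdz_comp hξ hh, wdzbar_comp hξ hh]
  exact Complex.sq_norm_mul_add_mul_conj_pair _ _ _ _

/-- Chain rule for the Dirichlet integrand under composition. -/
theorem stmt_0 (Ω Ω' : Set ℂ) (hΩ : IsOpen Ω) (hΩ' : IsOpen Ω')
    (ξ h : ℂ → ℂ) (z : ℂ) (hz : z ∈ Ω) (hw : ξ z ∈ Ω')
    (hξ : DifferentiableAt ℝ ξ z) (hh : DifferentiableAt ℝ h (ξ z)) :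
    DifferentiableAt ℝ (h ∘ ξ) z ∧
    (‖wdz (h ∘ ξ) z‖) ^ 2 + (‖wdzbar (h ∘ ξ) z‖) ^ 2 =
      ((‖wdz h (ξ z)‖) ^ 2 + (‖wdzbar h (ξ z)‖) ^ 2) *
        ((‖wdz ξ z‖) ^ 2 + (‖wdzbar ξ z‖) ^ 2) +
      4 * (wdz h (ξ z) * (starRingEnd ℂ) (wdzbar h (ξ z)) * wdz ξ z * wdzbar ξ z).re :=
  stmt_0_general ξ h z hξ hh
end

section
/- Let Ω ⊂ ℂ be an open set and h : Ω → ℂ a C¹ map. Then the following are equivalent: (i) for every test function η on Ω, ∫_Ω h_z(z)·conj(h_z̄(z))·η_z̄(z) dA(z) = 0 (equivalently, the first inner variation of the Dirichlet energy of h vanishes for every test function); (ii) the Hopf product 𝓗(z) = h_z(z)·conj(h_z̄(z)) is holomorphic on Ω, i.e. h satisfies the Hopf–Laplace equation. -/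
open Complex MeasureTheory Set

/-!
For continuous `H`, the vanishing of `∫ H · η_z̄` for all test functions `η` says that
`∂H/∂z̄ = 0` in the sense of distributions, so the theorem is Weyl's lemma for the
Cauchy–Riemann operator, applied to the Hopf product. If `H` is holomorphic, then
`(H η)_z̄ = H η_z̄`, and the integral of the `z̄`-derivative of a compactly supported `C¹`
function vanishes. Conversely, after cutting `H` off near a point, its mollifications satisfy
`(H ⋆ ψ)_z̄ (x) = -∫ H · (ψ (x - ·))_z̄ = 0`, so they are holomorphic, and they converge locally
uniformly to `H`, which is therefore holomorphic.
-/

open Filter Metric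
open scoped Topology Convolution

theorem ContDiffOn.contDiff_of_tsupport_subset {𝕜 E F : Type*} [NontriviallyNormedField 𝕜]
    [NormedAddCommGroup E] [NormedSpace 𝕜 E] [NormedAddCommGroup F] [NormedSpace 𝕜 F]
    {n : WithTop ℕ∞} {f : E → F} {s : Set E} (hf : ContDiffOn 𝕜 n f s) (hs : IsOpen s)
    (hsupp : tsupport f ⊆ s) : ContDiff 𝕜 n f := by
  refine contDiff_iff_contDiffAt.2 fun x => ?_
  by_cases hx : x ∈ s
  · exact hf.contDiffAt (hs.mem_nhds hx)
  · exact contDiffAt_const.congr_of_eventuallyEq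
      (notMem_tsupport_iff_eventuallyEq.1 fun h => hx (hsupp h))

section Wirtinger

variable {f g : ℂ → ℂ} {z : ℂ}

theorem wdzbar_of_notMem_tsupport (hz : z ∉ tsupport f) : wdzbar f z = 0 := by
  simp [wdzbar, fderiv_of_notMem_tsupport ℝ hz]

theorem wdzbar_eq_zero_iff : wdzbar f z = 0 ↔ fderiv ℝ f z I = I • fderiv ℝ f z 1 := by
  rw [wdzbar, smul_eq_mul]
  constructor <;> intro h
  · linear_combination (-2 * I) * h + fderiv ℝ f z I * I_sq
  · linear_combination (1 / 2 * I) * h + 1 / 2 * fderiv ℝ f z 1 * I_sq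

theorem differentiableAt_complex_iff_wdzbar_eq_zero :
    DifferentiableAt ℂ f z ↔ DifferentiableAt ℝ f z ∧ wdzbar f z = 0 := by
  rw [differentiableAt_complex_iff_differentiableAt_real, wdzbar_eq_zero_iff]

theorem wdzbar_mul (hf : DifferentiableAt ℝ f z) (hg : DifferentiableAt ℝ g z) :
    wdzbar (fun w => f w * g w) z = wdzbar f z * g z + f z * wdzbar g z := by
  simp only [wdzbar, fderiv_fun_mul hf hg, add_apply, smul_apply, smul_eq_mul]
  ring

theorem wdzbar_comp_const_sub (x : ℂ) (hf : DifferentiableAt ℝ f (x - z)) :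
    wdzbar (fun s => f (x - s)) z = -wdzbar f (x - z) := by
  have hderiv : HasFDerivAt (fun s => f (x - s))
      ((fderiv ℝ f (x - z)).comp (-ContinuousLinearMap.id ℝ ℂ)) z :=
    hf.hasFDerivAt.comp z ((hasFDerivAt_id z).const_sub x)
  simp only [wdzbar, hderiv.fderiv, ContinuousLinearMap.comp_apply, neg_apply,
    ContinuousLinearMap.id_apply, map_neg]
  ring

theorem ContDiffOn.continuousOn_wdz {s : Set ℂ} (hf : ContDiffOn ℝ 1 f s) (hs : IsOpen s) :
    ContinuousOn (wdz f) s := by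
  have hDf := hf.continuousOn_fderiv_of_isOpen hs le_rfl
  exact continuousOn_const.mul ((hDf.clm_apply continuousOn_const).sub
    (continuousOn_const.mul (hDf.clm_apply continuousOn_const)))

theorem ContDiffOn.continuousOn_wdzbar {s : Set ℂ} (hf : ContDiffOn ℝ 1 f s) (hs : IsOpen s) :
    ContinuousOn (wdzbar f) s := by
  have hDf := hf.continuousOn_fderiv_of_isOpen hs le_rfl
  exact continuousOn_const.mul ((hDf.clm_apply continuousOn_const).add
    (continuousOn_const.mul (hDf.clm_apply continuousOn_const)))

theorem integral_wdzbar_eq_zero (hf : ContDiff ℝ 1 f) (hs : HasCompactSupport f) :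
    ∫ z, wdzbar f z = 0 := by
  have hint : ∀ v, Integrable fun z => fderiv ℝ f z v := fun v =>
    ((hf.continuous_fderiv one_ne_zero).clm_apply continuous_const).integrable_of_hasCompactSupport
      (hs.fderiv_apply ℝ v)
  have hzero : ∀ v, ∫ z, fderiv ℝ f z v = 0 := fun v => by
    simpa using integral_mul_fderiv_eq_neg_fderiv_mul_of_integrable (f := fun _ => (1 : ℂ))
      (g := f) (v := v) (by simp) (by simpa using hint v)
      (hf.continuous.integrable_of_hasCompactSupport hs |>.const_mul 1)
      (fun _ _ => differentiableAt_const _) (fun z _ => hf.differentiable one_ne_zero z)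
  simp only [wdzbar]
  rw [integral_const_mul, integral_add (hint 1) ((hint I).const_mul I), integral_const_mul,
    hzero, hzero]
  simp

end Wirtinger

theorem setIntegral_mul_wdzbar_eq_zero {Ω : Set ℂ} (hΩ : IsOpen Ω) {H η : ℂ → ℂ}
    (hH : DifferentiableOn ℂ H Ω) (hη : IsTestFunction Ω η) :
    ∫ z in Ω, H z * wdzbar η z = 0 := by
  obtain ⟨hη_smooth, hη_compact, hη_Ω⟩ := hη
  have hHη_supp : tsupport (fun z => H z * η z) ⊆ Ω := tsupport_mul_subset_right.trans hη_Ω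
  have hHη : ContDiff ℝ 1 (fun z => H z * η z) :=
    ((hH.contDiffOn hΩ).restrict_scalars ℝ |>.mul (hη_smooth.of_le (by simp)).contDiffOn)
      |>.contDiff_of_tsupport_subset hΩ hHη_supp
  have hη_diff : Differentiable ℝ η := hη_smooth.differentiable (by simp)
  calc ∫ z in Ω, H z * wdzbar η z = ∫ z in Ω, wdzbar (fun z => H z * η z) z := by
        refine setIntegral_congr_fun hΩ.measurableSet fun z hz => ?_
        have hHz : DifferentiableAt ℂ H z := hH.differentiableAt (hΩ.mem_nhds hz)
        rw [wdzbar_mul (hHz.restrictScalars ℝ) (hη_diff z),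
          (differentiableAt_complex_iff_wdzbar_eq_zero.1 hHz).2]
        ring
    _ = ∫ z, wdzbar (fun z => H z * η z) z :=
        setIntegral_eq_integral_of_forall_compl_eq_zero fun z hz =>
          wdzbar_of_notMem_tsupport fun h => hz (hHη_supp h)
    _ = 0 := integral_wdzbar_eq_zero hHη (hη_compact.of_isClosed_subset (isClosed_tsupport _)
          tsupport_mul_subset_right)

theorem ContDiffBump.tendstoLocallyUniformly_normed_convolution {G E : Type*}
    [NormedAddCommGroup G] [NormedSpace ℝ G] [HasContDiffBump G] [MeasurableSpace G]
    [BorelSpace G] [FiniteDimensional ℝ G] {μ : Measure G} [μ.IsAddHaarMeasure]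
    [NormedAddCommGroup E] [NormedSpace ℝ E] [CompleteSpace E]
    {ι : Type*} {φ : ι → ContDiffBump (0 : G)} {l : Filter ι}
    (hφ : Tendsto (fun i => (φ i).rOut) l (𝓝 0)) {g : G → E} (hg : Continuous g) :
    TendstoLocallyUniformly
      (fun i => (φ i).normed μ ⋆[ContinuousLinearMap.lsmul ℝ ℝ, μ] g) g l := by
  refine tendstoLocallyUniformly_iff_forall_tendsto.2 fun x => ?_
  have hconv := ContDiffBump.convolution_tendsto_right (μ := μ) (g := fun _ => g)
    (hφ.comp (tendsto_fst (g := 𝓝 x))) (Eventually.of_forall fun _ => hg.aestronglyMeasurable)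
    ((hg.tendsto x).comp tendsto_snd) tendsto_snd
  exact (((hg.tendsto x).comp tendsto_snd).prodMk_nhds hconv).mono_right (nhds_le_uniformity _)

theorem convolution_mul_ofReal (G : ℂ → ℂ) (ψ : ℂ → ℝ) :
    G ⋆[ContinuousLinearMap.mul ℝ ℂ] (fun z => (ψ z : ℂ)) =
      ψ ⋆[ContinuousLinearMap.lsmul ℝ ℝ] G := by
  rw [← convolution_flip]
  ext x
  simp only [convolution_def, ContinuousLinearMap.mul_apply', ContinuousLinearMap.flip_apply,
    ContinuousLinearMap.lsmul_apply, Complex.real_smul, mul_comm]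

theorem wdzbar_convolution {G ψ : ℂ → ℂ} (hG : LocallyIntegrable G) (hψ : ContDiff ℝ 1 ψ)
    (hψs : HasCompactSupport ψ) (x : ℂ) :
    wdzbar (G ⋆[ContinuousLinearMap.mul ℝ ℂ] ψ) x = ∫ t, G t * wdzbar ψ (x - t) := by
  let L := ContinuousLinearMap.mul ℝ ℂ
  let W : (ℂ →L[ℝ] ℂ) →L[ℝ] ℂ := (1 / 2 : ℂ) •
    (ContinuousLinearMap.apply ℝ ℂ 1 + I • ContinuousLinearMap.apply ℝ ℂ I)
  have hW : ∀ f z, wdzbar f z = W (fderiv ℝ f z) := fun f z => rfl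
  have hint := (hψs.fderiv ℝ).convolutionExists_right (L.precompR ℂ) hG
    (hψ.continuous_fderiv one_ne_zero) x
  rw [hW, (hψs.hasFDerivAt_convolution_right L hG hψ x).fderiv, convolution_def,
    ← W.integral_comp_comm hint]
  congr 1
  ext t
  simp only [smul_add, one_div, ContinuousLinearMap.precompR_apply, ContinuousLinearMap.compL_apply,
    add_apply, smul_apply, ContinuousLinearMap.apply_apply, ContinuousLinearMap.comp_apply,
    ContinuousLinearMap.mul_apply', smul_eq_mul, wdzbar, W, L]
  ring

theorem wdzbar_convolution_eq_zero {U : Set ℂ} {G ψ : ℂ → ℂ}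
    (hG : Continuous G) (hA : ∀ η, IsTestFunction U η → ∫ z, G z * wdzbar η z = 0)
    (hψ : ContDiff ℝ (⊤ : ℕ∞) ψ) (hψs : HasCompactSupport ψ) {x : ℂ}
    (hx : (x - ·) ⁻¹' tsupport ψ ⊆ U) :
    wdzbar (G ⋆[ContinuousLinearMap.mul ℝ ℂ] ψ) x = 0 := by
  have hη : IsTestFunction U fun s => ψ (x - s) :=
    ⟨hψ.comp (contDiff_const.sub contDiff_id), hψs.comp_homeomorph (Homeomorph.subLeft x),
      (tsupport_comp_subset_preimage ψ (continuous_const.sub continuous_id)).trans hx⟩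
  have hψd : Differentiable ℝ ψ := hψ.differentiable (by simp)
  calc wdzbar (G ⋆[ContinuousLinearMap.mul ℝ ℂ] ψ) x = ∫ t, G t * wdzbar ψ (x - t) :=
        wdzbar_convolution hG.locallyIntegrable (hψ.of_le (by simp)) hψs x
    _ = -∫ t, G t * wdzbar (fun s => ψ (x - s)) t := by
        rw [← integral_neg]
        congr 1 with t
        rw [wdzbar_comp_const_sub x (hψd _)]
        ring
    _ = 0 := by rw [hA _ hη, neg_zero]

theorem exists_seq_contDiffBump_rOut_le {E : Type*} [NormedAddCommGroup E] [NormedSpace ℝ E]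
    {r : ℝ} (hr : 0 < r) :
    ∃ φ : ℕ → ContDiffBump (0 : E), (∀ n, (φ n).rOut ≤ r) ∧
      Tendsto (fun n => (φ n).rOut) atTop (𝓝 0) := by
  refine ⟨fun n => ⟨r / (n + 1) / 2, r / (n + 1), by positivity, by
    linarith [show 0 < r / (n + 1) by positivity]⟩, fun n => ?_, ?_⟩
  · exact div_le_self hr.le (by simp)
  · exact tendsto_const_nhds.div_atTop (tendsto_natCast_atTop_atTop.atTop_add tendsto_const_nhds)

theorem differentiableOn_of_forall_integral_mul_wdzbar_eq_zero {U : Set ℂ} (hU : IsOpen U)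
    {G : ℂ → ℂ} (hG : Continuous G)
    (hA : ∀ η, IsTestFunction U η → ∫ z, G z * wdzbar η z = 0) :
    DifferentiableOn ℂ G U := by
  intro z₀ hz₀
  obtain ⟨ε, hε, hεU⟩ := nhds_basis_closedBall.mem_iff.1 (hU.mem_nhds hz₀)
  obtain ⟨φ, hφr, hφ0⟩ := exists_seq_contDiffBump_rOut_le (E := ℂ) (half_pos hε)
  let ψ : ℕ → ℂ → ℂ := fun n z => ((φ n).normed volume z : ℂ)
  have hψ : ∀ n, ContDiff ℝ (⊤ : ℕ∞) (ψ n) := fun n =>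
    ofRealCLM.contDiff.comp (φ n).contDiff_normed
  have hψ_supp : ∀ n, tsupport (ψ n) ⊆ closedBall 0 (φ n).rOut := fun n =>
    (tsupport_comp_subset ofReal_zero _).trans (φ n).tsupport_normed_eq.subset
  have hψs : ∀ n, HasCompactSupport (ψ n) := fun n =>
    (isCompact_closedBall _ _).of_isClosed_subset (isClosed_tsupport _) (hψ_supp n)
  have hhol : ∀ n,
      DifferentiableOn ℂ (G ⋆[ContinuousLinearMap.mul ℝ ℂ] ψ n) (ball z₀ (ε / 2)) := by
    intro n x hx
    refine (differentiableAt_complex_iff_wdzbar_eq_zero.2 ⟨?_, ?_⟩).differentiableWithinAt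
    · exact ((hψs n).hasFDerivAt_convolution_right _ hG.locallyIntegrable
        ((hψ n).of_le (by simp)) x).differentiableAt
    · refine wdzbar_convolution_eq_zero hG hA (hψ n) (hψs n) fun t ht => hεU ?_
      have htx : dist t x ≤ ε / 2 := by
        simpa [dist_comm t, dist_eq_norm] using (hψ_supp n ht).trans (hφr n)
      exact (dist_triangle t x z₀).trans (by linarith [mem_ball.1 hx])
  have hlim :
      TendstoLocallyUniformly (fun n => G ⋆[ContinuousLinearMap.mul ℝ ℂ] ψ n) G atTop := by
    simpa only [ψ, convolution_mul_ofReal] using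
      ContDiffBump.tendstoLocallyUniformly_normed_convolution (μ := volume) hφ0 hG
  exact ((hlim.tendstoLocallyUniformlyOn.differentiableOn (Eventually.of_forall hhol)
    isOpen_ball).differentiableAt (ball_mem_nhds z₀ (half_pos hε))).differentiableWithinAt

theorem differentiableOn_of_forall_setIntegral_mul_wdzbar_eq_zero {Ω : Set ℂ} (hΩ : IsOpen Ω)
    {H : ℂ → ℂ} (hH : ContinuousOn H Ω)
    (hA : ∀ η, IsTestFunction Ω η → ∫ z in Ω, H z * wdzbar η z = 0) :
    DifferentiableOn ℂ H Ω := by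
  intro z₀ hz₀
  obtain ⟨ε, hε, hεΩ⟩ := nhds_basis_closedBall.mem_iff.1 (hΩ.mem_nhds hz₀)
  let χ : ContDiffBump z₀ := ⟨ε / 2, ε, half_pos hε, half_lt_self hε⟩
  let G : ℂ → ℂ := fun z => (χ z : ℂ) * H z
  have hG : Continuous G := ((continuous_ofReal.comp χ.continuous).continuousOn.mul hH)
    |>.continuous_of_tsupport_subset hΩ <| tsupport_mul_subset_left.trans <|
      (tsupport_comp_subset ofReal_zero _).trans (χ.tsupport_eq.trans_subset hεΩ)
  have hGH : ∀ z ∈ ball z₀ (ε / 2), G z = H z := fun z hz => by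
    simp [G, χ.one_of_mem_closedBall (ball_subset_closedBall hz)]
  have hBΩ : ball z₀ (ε / 2) ⊆ Ω :=
    (ball_subset_ball (half_le_self hε.le)).trans (ball_subset_closedBall.trans hεΩ)
  have hG_hol : DifferentiableOn ℂ G (ball z₀ (ε / 2)) := by
    refine differentiableOn_of_forall_integral_mul_wdzbar_eq_zero isOpen_ball hG fun η hη => ?_
    have hGη : ∀ z, G z * wdzbar η z = H z * wdzbar η z := fun z => by
      by_cases hz : z ∈ tsupport η
      · rw [hGH z (hη.2.2 hz)]
      · simp [wdzbar_of_notMem_tsupport hz]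
    rw [← setIntegral_eq_integral_of_forall_compl_eq_zero (s := Ω) fun z hz =>
      by rw [wdzbar_of_notMem_tsupport fun h => hz (hBΩ (hη.2.2 h)), mul_zero]]
    simp_rw [hGη]
    exact hA η ⟨hη.1, hη.2.1, hη.2.2.trans hBΩ⟩
  have hHG : H =ᶠ[𝓝 z₀] G :=
    eventually_of_mem (ball_mem_nhds z₀ (half_pos hε)) fun z hz => (hGH z hz).symm
  exact ((hG_hol.differentiableAt (ball_mem_nhds z₀ (half_pos hε))).congr_of_eventuallyEq
    hHG).differentiableWithinAt

/-- The first inner variation vanishes for every test function if and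
only if the Hopf product is holomorphic (the Hopf–Laplace equation). -/
theorem stmt_6 (Ω : Set ℂ) (hΩo : IsOpen Ω)
    (h : ℂ → ℂ) (hh : ContDiffOn ℝ 1 h Ω) :
    (∀ η : ℂ → ℂ, IsTestFunction Ω η →
        ∫ z in Ω, wdz h z * (starRingEnd ℂ) (wdzbar h z) * wdzbar η z = 0) ↔
      DifferentiableOn ℂ (fun z => wdz h z * (starRingEnd ℂ) (wdzbar h z)) Ω := by
  constructor
  · exact differentiableOn_of_forall_setIntegral_mul_wdzbar_eq_zero hΩo
      ((hh.continuousOn_wdz hΩo).mul (hh.continuousOn_wdzbar hΩo).star)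
  · exact fun hH η hη => setIntegral_mul_wdzbar_eq_zero hΩo hH hη
end

section
/- Let Ω ⊂ ℂ be a bounded domain (open and connected) and let h : Ω → ℂ be C¹ with finite Dirichlet energy, with vanishing Hopf product h_z(z)·conj(h_z̄(z)) = 0 for every z ∈ Ω, and with Dh(z) ≠ 0 for almost every z ∈ Ω. Then every nontrivial inner variation strictly increases the energy: for every admissible change of variables ξ of Ω with ξ not equal to the identity map, E[h] < E[h ∘ ξ]. -/
open Complex MeasureTheory Set

/-!
Write `p = ξ_z`, `q = ξ_z̄`. The chain rule gives `(h ∘ ξ)_z = h_z(ξ) p + h_z̄(ξ) q̄` and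
`(h ∘ ξ)_z̄ = h_z(ξ) q + h_z̄(ξ) p̄`; since `h_z · conj h_z̄ = 0` the cross terms cancel, so the
energy density of `h ∘ ξ` is `(|h_z|² + |h_z̄|²)(ξ) · (|p|² + |q|²)`, and
`|p|² + |q|² = J_ξ + 2|q|²`. Changing variables in the `J_ξ` part,
`E[h ∘ ξ] = E[h] + 2 ∫_Ω |q|² (|h_z|² + |h_z̄|²)(ξ)`.
The excess is positive. If `q ≡ 0`, then `ξ` is holomorphic and agrees with the identity near a
point of `Ω` outside the compact set where it moves (there is one, `Ω` being bounded), hence on the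
domain `Ω`. So `q ≠ 0` on a nonempty open set, while `Dh(ξ) ≠ 0` a.e. because `ξ`, having
positive Jacobian, pulls null sets back to null sets.
-/

open ComplexConjugate Filter Topology

noncomputable def wirtingerZ (L : ℂ →L[ℝ] ℂ) : ℂ := (1 / 2 : ℂ) * (L 1 - I * L I)

noncomputable def wirtingerZbar (L : ℂ →L[ℝ] ℂ) : ℂ := (1 / 2 : ℂ) * (L 1 + I * L I)

theorem apply_eq_wirtinger (L : ℂ →L[ℝ] ℂ) (v : ℂ) :
    L v = wirtingerZ L * v + wirtingerZbar L * conj v := by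
  have hL : L v = v.re * L 1 + v.im * L I := by
    rw [← real_smul, ← real_smul, ← map_smul, ← map_smul, ← map_add]
    congr 1
    apply Complex.ext <;> simp
  have hconj : conj v = v.re - v.im * I := by
    apply Complex.ext <;> simp
  rw [hL, hconj, wirtingerZ, wirtingerZbar]
  linear_combination (-(1 / 2) * (L 1 - I * L I)) * (re_add_im v).symm + (v.im * L I) * I_sq

theorem wirtinger_eq_of_apply_eq {L : ℂ →L[ℝ] ℂ} {a b : ℂ}
    (hL : ∀ v, L v = a * v + b * conj v) : wirtingerZ L = a ∧ wirtingerZbar L = b := by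
  simp only [wirtingerZ, wirtingerZbar, hL, map_one, conj_I]
  constructor
  · linear_combination (-(1 / 2) * (a - b)) * I_sq
  · linear_combination ((1 / 2) * (a - b)) * I_sq

theorem eq_zero_of_wirtinger_eq_zero {L : ℂ →L[ℝ] ℂ} (hZ : wirtingerZ L = 0)
    (hZbar : wirtingerZbar L = 0) : L = 0 := by
  ext v
  simp [apply_eq_wirtinger L v, hZ, hZbar]

theorem restrictScalars_eq_of_wirtingerZbar_eq_zero {L : ℂ →L[ℝ] ℂ} (hZbar : wirtingerZbar L = 0) :
    (wirtingerZ L • (1 : ℂ →L[ℂ] ℂ)).restrictScalars ℝ = L := by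
  ext v
  simp [apply_eq_wirtinger L v, hZbar]

theorem wirtinger_comp (L M : ℂ →L[ℝ] ℂ) :
    wirtingerZ (L.comp M) =
        wirtingerZ L * wirtingerZ M + wirtingerZbar L * conj (wirtingerZbar M) ∧
      wirtingerZbar (L.comp M) =
        wirtingerZ L * wirtingerZbar M + wirtingerZbar L * conj (wirtingerZ M) :=
  wirtinger_eq_of_apply_eq fun v => by
    rw [ContinuousLinearMap.comp_apply, apply_eq_wirtinger L, apply_eq_wirtinger M v]
    simp only [map_add, map_mul, conj_conj]
    ring

theorem det_eq_wirtinger (L : ℂ →L[ℝ] ℂ) :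
    L.det = ‖wirtingerZ L‖ ^ 2 - ‖wirtingerZbar L‖ ^ 2 := by
  have : L.det = LinearMap.det (L : ℂ →ₗ[ℝ] ℂ) := rfl
  rw [this, ← LinearMap.det_toMatrix basisOneI, Matrix.det_fin_two]
  simp only [LinearMap.toMatrix_apply, coe_basisOneI_repr, coe_basisOneI]
  simp only [Fin.isValue, Matrix.cons_val_zero, Matrix.cons_val_one, ContinuousLinearMap.coe_coe]
  rw [wirtingerZ, wirtingerZbar, Complex.sq_norm, Complex.sq_norm]
  simp only [one_div, normSq_apply, mul_re, inv_re, re_ofNat, div_self_mul_self',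
    sub_re, I_re, zero_mul, I_im, one_mul, zero_sub, sub_neg_eq_add, inv_im, im_ofNat, neg_zero,
    zero_div, sub_im, mul_im, zero_add, sub_zero, add_zero, add_re, add_im]
  ring

theorem sq_norm_add_sq_norm_of_mul_conj_eq_zero {a b p q : ℂ} (hab : a * conj b = 0) :
    ‖a * p + b * conj q‖ ^ 2 + ‖a * q + b * conj p‖ ^ 2 =
      (‖a‖ ^ 2 + ‖b‖ ^ 2) * (‖p‖ ^ 2 + ‖q‖ ^ 2) := by
  have hab' : conj a * b = 0 := by simpa using congrArg conj hab
  apply ofReal_injective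
  push_cast
  simp only [← mul_conj', map_add, map_mul, conj_conj]
  linear_combination (2 * p * q) * hab + (2 * conj p * conj q) * hab'

noncomputable def energyDensity (f : ℂ → ℂ) (z : ℂ) : ℝ := ‖wdz f z‖ ^ 2 + ‖wdzbar f z‖ ^ 2

noncomputable def jacobian (f : ℂ → ℂ) (z : ℂ) : ℝ := ‖wdz f z‖ ^ 2 - ‖wdzbar f z‖ ^ 2

section Wirtinger

variable {f h ξ : ℂ → ℂ} {z : ℂ}

theorem wdz_comp_and_wdzbar_comp (hh : DifferentiableAt ℝ h (ξ z)) (hξ : DifferentiableAt ℝ ξ z) :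
    wdz (h ∘ ξ) z = wdz h (ξ z) * wdz ξ z + wdzbar h (ξ z) * conj (wdzbar ξ z) ∧
      wdzbar (h ∘ ξ) z = wdz h (ξ z) * wdzbar ξ z + wdzbar h (ξ z) * conj (wdz ξ z) := by
  simp only [wdz, wdzbar, fderiv_comp z hh hξ]
  exact wirtinger_comp _ _

theorem energyDensity_comp (hh : DifferentiableAt ℝ h (ξ z)) (hξ : DifferentiableAt ℝ ξ z)
    (hHopf : wdz h (ξ z) * conj (wdzbar h (ξ z)) = 0) :
    energyDensity (h ∘ ξ) z = energyDensity h (ξ z) * energyDensity ξ z := by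
  obtain ⟨hZ, hZbar⟩ := wdz_comp_and_wdzbar_comp hh hξ
  rw [energyDensity, hZ, hZbar, sq_norm_add_sq_norm_of_mul_conj_eq_zero hHopf]
  rfl

theorem energyDensity_eq_jacobian_add (f : ℂ → ℂ) (z : ℂ) :
    energyDensity f z = jacobian f z + 2 * ‖wdzbar f z‖ ^ 2 := by
  rw [energyDensity, jacobian]
  ring

theorem energyDensity_nonneg (f : ℂ → ℂ) (z : ℂ) : 0 ≤ energyDensity f z := by
  unfold energyDensity
  positivity

theorem energyDensity_pos (hf : fderiv ℝ f z ≠ 0) : 0 < energyDensity f z := by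
  refine (energyDensity_nonneg f z).lt_of_ne' fun h0 => hf ?_
  rw [energyDensity, add_eq_zero_iff_of_nonneg (by positivity) (by positivity)] at h0
  simp only [pow_eq_zero_iff two_ne_zero, norm_eq_zero] at h0
  exact eq_zero_of_wirtinger_eq_zero h0.1 h0.2

theorem det_fderiv_eq_jacobian (f : ℂ → ℂ) (z : ℂ) : (fderiv ℝ f z).det = jacobian f z :=
  det_eq_wirtinger _

theorem differentiableAt_complex_of_wdzbar_eq_zero (hf : DifferentiableAt ℝ f z)
    (h0 : wdzbar f z = 0) : DifferentiableAt ℂ f z :=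
  (hasFDerivAt_of_restrictScalars ℝ hf.hasFDerivAt
    (restrictScalars_eq_of_wirtingerZbar_eq_zero h0)).differentiableAt

theorem wdzbar_eq_zero_of_eventuallyEq_id (hf : f =ᶠ[𝓝 z] id) : wdzbar f z = 0 := by
  simp [wdzbar, hf.fderiv_eq, fderiv_id, I_mul_I]

theorem wdzbar_eq_zero_of_notMem {K : Set ℂ} (hK : IsClosed K) (hfK : ∀ w ∉ K, f w = w)
    (hz : z ∉ K) : wdzbar f z = 0 :=
  wdzbar_eq_zero_of_eventuallyEq_id (eventually_of_mem (hK.isOpen_compl.mem_nhds hz) hfK)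

end Wirtinger

theorem ae_restrict_comp_of_det_ne_zero {E : Type*} [NormedAddCommGroup E] [NormedSpace ℝ E]
    [FiniteDimensional ℝ E] [MeasurableSpace E] [BorelSpace E] (μ : Measure E)
    [μ.IsAddHaarMeasure] {s : Set E} {f : E → E} {f' : E → E →L[ℝ] E} (hs : MeasurableSet s)
    (hf' : ∀ x ∈ s, HasFDerivWithinAt f (f' x) s x) (hf : InjOn f s)
    (hdet : ∀ x ∈ s, (f' x).det ≠ 0) {p : E → Prop} (hp : ∀ᵐ y ∂μ.restrict (f '' s), p y) :
    ∀ᵐ x ∂μ.restrict s, p (f x) := by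
  rw [← map_withDensity_abs_det_fderiv_eq_addHaar μ hs.nullMeasurableSet hf' hf] at hp
  have hfm : AEMeasurable f (μ.restrict s) :=
    ContinuousOn.aemeasurable (fun x hx => (hf' x hx).continuousWithinAt) hs
  refine (withDensity_absolutelyContinuous' ?_ ?_).ae_le
    (ae_of_ae_map (hfm.mono_ac (withDensity_absolutelyContinuous _ _)) hp)
  · exact aemeasurable_ofReal_abs_det_fderivWithin μ hs hf'
  · filter_upwards [ae_restrict_mem hs] with x hx
    simpa using hdet x hx

namespace IsAdmissibleChange

variable {Ω : Set ℂ} {ξ : ℂ → ℂ}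

theorem differentiableAt (hξ : IsAdmissibleChange Ω ξ) (hΩo : IsOpen Ω) {z : ℂ} (hz : z ∈ Ω) :
    DifferentiableAt ℝ ξ z :=
  (hξ.contDiffOn.differentiableOn one_ne_zero).differentiableAt (hΩo.mem_nhds hz)

theorem hasFDerivWithinAt (hξ : IsAdmissibleChange Ω ξ) (hΩo : IsOpen Ω) {z : ℂ} (hz : z ∈ Ω) :
    HasFDerivWithinAt ξ (fderiv ℝ ξ z) Ω z :=
  (hξ.differentiableAt hΩo hz).hasFDerivAt.hasFDerivWithinAt

theorem jacobian_pos (hξ : IsAdmissibleChange Ω ξ) {z : ℂ} (hz : z ∈ Ω) : 0 < jacobian ξ z :=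
  hξ.jac_pos z hz

theorem abs_det_fderiv (hξ : IsAdmissibleChange Ω ξ) {z : ℂ} (hz : z ∈ Ω) :
    |(fderiv ℝ ξ z).det| = jacobian ξ z := by
  rw [det_fderiv_eq_jacobian, abs_of_pos (hξ.jacobian_pos hz)]

theorem setIntegral_eq_setIntegral_jacobian_mul (hξ : IsAdmissibleChange Ω ξ) (hΩo : IsOpen Ω)
    (g : ℂ → ℝ) : ∫ z in Ω, g z = ∫ z in Ω, jacobian ξ z * g (ξ z) := by
  conv_lhs => rw [← hξ.bijOn.image_eq]
  rw [integral_image_eq_integral_abs_det_fderiv_smul volume hΩo.measurableSet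
    (fun z hz => hξ.hasFDerivWithinAt hΩo hz) hξ.bijOn.injOn g]
  exact setIntegral_congr_fun hΩo.measurableSet fun z hz => by
    rw [hξ.abs_det_fderiv hz, smul_eq_mul]

theorem integrableOn_jacobian_mul_comp (hξ : IsAdmissibleChange Ω ξ) (hΩo : IsOpen Ω)
    {g : ℂ → ℝ} (hg : IntegrableOn g Ω) :
    IntegrableOn (fun z => jacobian ξ z * g (ξ z)) Ω := by
  rw [← hξ.bijOn.image_eq, integrableOn_image_iff_integrableOn_abs_det_fderiv_smul volume
    hΩo.measurableSet (fun z hz => hξ.hasFDerivWithinAt hΩo hz) hξ.bijOn.injOn g] at hg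
  exact hg.congr_fun (fun z hz => by dsimp only; rw [hξ.abs_det_fderiv hz, smul_eq_mul])
    hΩo.measurableSet

theorem ae_comp (hξ : IsAdmissibleChange Ω ξ) (hΩo : IsOpen Ω) {p : ℂ → Prop}
    (hp : ∀ᵐ w ∂volume.restrict Ω, p w) : ∀ᵐ z ∂volume.restrict Ω, p (ξ z) := by
  rw [← hξ.bijOn.image_eq] at hp
  refine ae_restrict_comp_of_det_ne_zero volume hΩo.measurableSet
    (fun z hz => hξ.hasFDerivWithinAt hΩo hz) hξ.bijOn.injOn (fun z hz => ?_) hp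
  rw [det_fderiv_eq_jacobian]
  exact (hξ.jacobian_pos hz).ne'

theorem continuousOn_wdz (hξ : IsAdmissibleChange Ω ξ) (hΩo : IsOpen Ω) :
    ContinuousOn (wdz ξ) Ω := by
  have hcont := hξ.contDiffOn.continuousOn_fderiv_of_isOpen hΩo le_rfl
  exact continuousOn_const.mul ((hcont.clm_apply continuousOn_const).sub
    (continuousOn_const.mul (hcont.clm_apply continuousOn_const)))

theorem continuousOn_wdzbar (hξ : IsAdmissibleChange Ω ξ) (hΩo : IsOpen Ω) :
    ContinuousOn (wdzbar ξ) Ω := by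
  have hcont := hξ.contDiffOn.continuousOn_fderiv_of_isOpen hΩo le_rfl
  exact continuousOn_const.mul ((hcont.clm_apply continuousOn_const).add
    (continuousOn_const.mul (hcont.clm_apply continuousOn_const)))

theorem continuousOn_sq_norm_wdzbar_div_jacobian (hξ : IsAdmissibleChange Ω ξ)
    (hΩo : IsOpen Ω) : ContinuousOn (fun z => ‖wdzbar ξ z‖ ^ 2 / jacobian ξ z) Ω :=
  ((hξ.continuousOn_wdzbar hΩo).norm.pow 2).div
    (((hξ.continuousOn_wdz hΩo).norm.pow 2).sub ((hξ.continuousOn_wdzbar hΩo).norm.pow 2))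
    fun _ hz => (hξ.jacobian_pos hz).ne'

theorem exists_bound_sq_norm_wdzbar_div_jacobian (hξ : IsAdmissibleChange Ω ξ)
    (hΩo : IsOpen Ω) : ∃ C, ∀ z ∈ Ω, ‖wdzbar ξ z‖ ^ 2 / jacobian ξ z ≤ C := by
  obtain ⟨K, hKc, hKΩ, hξK⟩ := hξ.eq_id
  obtain ⟨C, hC⟩ := hKc.exists_bound_of_continuousOn
    ((hξ.continuousOn_sq_norm_wdzbar_div_jacobian hΩo).mono hKΩ)
  refine ⟨max C 0, fun z hz => ?_⟩
  by_cases hzK : z ∈ K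
  · exact (le_abs_self _).trans ((hC z hzK).trans (le_max_left _ _))
  · simp [wdzbar_eq_zero_of_notMem hKc.isClosed hξK hzK]

theorem exists_mem_eventuallyEq_id (hξ : IsAdmissibleChange Ω ξ) (hΩo : IsOpen Ω)
    (hΩne : Ω.Nonempty) (hΩb : Bornology.IsBounded Ω) : ∃ z ∈ Ω, ξ =ᶠ[𝓝 z] id := by
  obtain ⟨K, hKc, hKΩ, hξK⟩ := hξ.eq_id
  obtain ⟨z, hzΩ, hzK⟩ : ∃ z ∈ Ω, z ∉ K := by
    by_contra! hΩK
    have hΩ : IsClopen Ω := ⟨(hKΩ.antisymm hΩK) ▸ hKc.isClosed, hΩo⟩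
    rcases isClopen_iff.mp hΩ with hempty | huniv
    · exact hΩne.ne_empty hempty
    · exact NormedSpace.unbounded_univ ℝ ℂ (huniv ▸ hΩb)
  exact ⟨z, hzΩ, eventually_of_mem (hKc.isClosed.isOpen_compl.mem_nhds hzK) hξK⟩

theorem exists_wdzbar_ne_zero (hξ : IsAdmissibleChange Ω ξ) (hΩo : IsOpen Ω)
    (hΩc : IsConnected Ω) (hΩb : Bornology.IsBounded Ω) (hne : ∃ z ∈ Ω, ξ z ≠ z) :
    ∃ z ∈ Ω, wdzbar ξ z ≠ 0 := by
  by_contra! hzero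
  obtain ⟨z₁, hz₁, hξz₁⟩ := hne
  have hholo : DifferentiableOn ℂ ξ Ω := fun z hz =>
    (differentiableAt_complex_of_wdzbar_eq_zero (hξ.differentiableAt hΩo hz)
      (hzero z hz)).differentiableWithinAt
  obtain ⟨z₀, hz₀, hξz₀⟩ := hξ.exists_mem_eventuallyEq_id hΩo hΩc.nonempty hΩb
  exact hξz₁ (AnalyticOnNhd.eqOn_of_preconnected_of_eventuallyEq (hholo.analyticOnNhd hΩo)
    (differentiableOn_id.analyticOnNhd hΩo) hΩc.isPreconnected hz₀ hξz₀ hz₁)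

end IsAdmissibleChange

section Energy

variable {Ω : Set ℂ} {h ξ : ℂ → ℂ}

theorem integrableOn_sq_norm_wdzbar_mul_energyDensity_comp (hΩo : IsOpen Ω)
    (hξ : IsAdmissibleChange Ω ξ) (hfin : IntegrableOn (energyDensity h) Ω) :
    IntegrableOn (fun z => ‖wdzbar ξ z‖ ^ 2 * energyDensity h (ξ z)) Ω := by
  obtain ⟨C, hC⟩ := hξ.exists_bound_sq_norm_wdzbar_div_jacobian hΩo
  refine ((hξ.integrableOn_jacobian_mul_comp hΩo hfin).bdd_mul (c := C)
    ((hξ.continuousOn_sq_norm_wdzbar_div_jacobian hΩo).aestronglyMeasurable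
      hΩo.measurableSet) ?_).congr ?_
  · filter_upwards [ae_restrict_mem hΩo.measurableSet] with z hz
    rw [Real.norm_of_nonneg (div_nonneg (sq_nonneg _) (hξ.jacobian_pos hz).le)]
    exact hC z hz
  · filter_upwards [ae_restrict_mem hΩo.measurableSet] with z hz
    field_simp [(hξ.jacobian_pos hz).ne']

theorem energy_comp_eq_add (hΩo : IsOpen Ω) (hξ : IsAdmissibleChange Ω ξ)
    (hh : DifferentiableOn ℝ h Ω) (hfin : IntegrableOn (energyDensity h) Ω)
    (hHopf : ∀ z ∈ Ω, wdz h z * conj (wdzbar h z) = 0) :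
    energy Ω (h ∘ ξ) =
      energy Ω h + ∫ z in Ω, 2 * (‖wdzbar ξ z‖ ^ 2 * energyDensity h (ξ z)) := by
  have hdensity : ∀ z ∈ Ω, energyDensity (h ∘ ξ) z =
      jacobian ξ z * energyDensity h (ξ z) + 2 * (‖wdzbar ξ z‖ ^ 2 * energyDensity h (ξ z)) := by
    intro z hz
    have hξz := hξ.bijOn.mapsTo hz
    rw [energyDensity_comp (hh.differentiableAt (hΩo.mem_nhds hξz)) (hξ.differentiableAt hΩo hz)
      (hHopf _ hξz), energyDensity_eq_jacobian_add ξ z]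
    ring
  calc energy Ω (h ∘ ξ)
      = ∫ z in Ω, (jacobian ξ z * energyDensity h (ξ z) +
          2 * (‖wdzbar ξ z‖ ^ 2 * energyDensity h (ξ z))) :=
        setIntegral_congr_fun hΩo.measurableSet hdensity
    _ = energy Ω h + ∫ z in Ω, 2 * (‖wdzbar ξ z‖ ^ 2 * energyDensity h (ξ z)) := by
        rw [integral_add (hξ.integrableOn_jacobian_mul_comp hΩo hfin)
          ((integrableOn_sq_norm_wdzbar_mul_energyDensity_comp hΩo hξ hfin).const_mul 2),
          energy, ← hξ.setIntegral_eq_setIntegral_jacobian_mul hΩo]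
        rfl

theorem setIntegral_sq_norm_wdzbar_mul_energyDensity_comp_pos (hΩo : IsOpen Ω)
    (hΩc : IsConnected Ω) (hΩb : Bornology.IsBounded Ω) (hξ : IsAdmissibleChange Ω ξ)
    (hne : ∃ z ∈ Ω, ξ z ≠ z) (hfin : IntegrableOn (energyDensity h) Ω)
    (hD : ∀ᵐ z ∂volume.restrict Ω, fderiv ℝ h z ≠ 0) :
    0 < ∫ z in Ω, ‖wdzbar ξ z‖ ^ 2 * energyDensity h (ξ z) := by
  obtain ⟨z₀, hz₀, hwz₀⟩ := hξ.exists_wdzbar_ne_zero hΩo hΩc hΩb hne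
  let U := Ω ∩ wdzbar ξ ⁻¹' {0}ᶜ
  have hUo : IsOpen U :=
    (hξ.continuousOn_wdzbar hΩo).isOpen_inter_preimage hΩo isOpen_compl_singleton
  have hpos : ∀ᵐ z ∂volume.restrict Ω, 0 < energyDensity h (ξ z) :=
    hξ.ae_comp hΩo (hD.mono fun z => energyDensity_pos)
  rw [integral_pos_iff_support_of_nonneg
    (fun z => mul_nonneg (sq_nonneg _) (energyDensity_nonneg h (ξ z)))
    (integrableOn_sq_norm_wdzbar_mul_energyDensity_comp hΩo hξ hfin)]
  calc 0 < volume U := hUo.measure_pos volume ⟨z₀, hz₀, hwz₀⟩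
    _ = volume.restrict Ω U := by
        rw [Measure.restrict_apply hUo.measurableSet, inter_eq_left.mpr inter_subset_left]
    _ ≤ volume.restrict Ω _ := measure_mono_ae <| hpos.mono fun z hz hzU =>
        (mul_pos (pow_pos (norm_pos_iff.mpr hzU.2) 2) hz).ne'

end Energy

/-- If the Hopf product of `h` vanishes identically on a bounded domain
and `Dh ≠ 0` a.e., then every nontrivial inner variation strictly increases the energy. -/
theorem stmt_17 (Ω : Set ℂ) (hΩo : IsOpen Ω) (hΩc : IsConnected Ω)
    (hΩb : Bornology.IsBounded Ω)
    (h : ℂ → ℂ) (hh : ContDiffOn ℝ 1 h Ω)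
    (hfin : IntegrableOn
      (fun z => (‖wdz h z‖) ^ 2 + (‖wdzbar h z‖) ^ 2) Ω volume)
    (hHopf : ∀ z ∈ Ω, wdz h z * (starRingEnd ℂ) (wdzbar h z) = 0)
    (hD : ∀ᵐ z ∂(volume.restrict Ω), fderiv ℝ h z ≠ 0) :
    ∀ ξ : ℂ → ℂ, IsAdmissibleChange Ω ξ → (∃ z ∈ Ω, ξ z ≠ z) →
      energy Ω h < energy Ω (h ∘ ξ) := by
  intro ξ hξ hne
  rw [energy_comp_eq_add hΩo hξ (hh.differentiableOn one_ne_zero) hfin hHopf, integral_const_mul]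
  have hexcess := setIntegral_sq_norm_wdzbar_mul_energyDensity_comp_pos hΩo hΩc hΩb hξ hne hfin hD
  linarith
end

section
/- Let 0 < r < 1 and let A = { z ∈ ℂ : r < |z| < 1 } be the annulus. The map h(z) = z/|z| is smooth on A and its Hopf product is the holomorphic function h_z(z)·conj(h_z̄(z)) = −1/(4z²) for every z ∈ A; in particular, h is Hopf harmonic on A. -/
open Complex MeasureTheory Set

/-!
Away from the origin `h z = ‖z‖⁻¹ • z` is smooth, with real derivative
`v ↦ v / (2‖z‖) - z² / (2‖z‖³) · v̄`. Reading off the coefficients of `v` and `v̄` gives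
`h_z = 1 / (2‖z‖)` and `h_z̄ = -z² / (2‖z‖³)`, so the Hopf product is `-z̄² / (4‖z‖⁴)`, which is
`-1 / (4z²)` because `‖z‖² = z z̄`; this is holomorphic on the annulus since `0 ∉ A`.
-/

section RadialProjection

variable {E : Type*} [NormedAddCommGroup E] [InnerProductSpace ℝ E] {x : E}

theorem hasFDerivAt_norm_of_ne_zero (hx : x ≠ 0) :
    HasFDerivAt (‖·‖) (‖x‖⁻¹ • innerSL ℝ x) x := by
  have hsq := ((hasStrictFDerivAt_norm_sq x).hasFDerivAt).sqrt (by positivity)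
  simp only [Real.sqrt_sq (norm_nonneg _)] at hsq
  convert hsq using 1
  ext v
  simp only [smul_apply, coe_innerSL_apply, smul_eq_mul, one_div, mul_inv_rev, nsmul_eq_mul,
    Nat.cast_ofNat]
  field_simp

theorem hasFDerivAt_inv_norm_smul (hx : x ≠ 0) :
    HasFDerivAt (fun y : E => ‖y‖⁻¹ • y)
      (‖x‖⁻¹ • ContinuousLinearMap.id ℝ E - (‖x‖ ^ 3)⁻¹ • (innerSL ℝ x).smulRight x) x := by
  have hinv := (hasDerivAt_inv (norm_ne_zero_iff.mpr hx)).comp_hasFDerivAt x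
    (hasFDerivAt_norm_of_ne_zero hx)
  refine (hinv.smul (hasFDerivAt_id x)).congr_fderiv ?_
  ext v
  simp only [sub_apply, add_apply, smul_apply, ContinuousLinearMap.smulRight_apply,
    Function.comp_apply, ContinuousLinearMap.id_apply, id, innerSL_apply_apply, smul_eq_mul]
  module

theorem contDiffAt_inv_norm_smul {n : WithTop ℕ∞} (hx : x ≠ 0) :
    ContDiffAt ℝ n (fun y : E => ‖y‖⁻¹ • y) x :=
  ((contDiffAt_norm ℝ hx).inv (norm_ne_zero_iff.mpr hx)).smul contDiffAt_id

end RadialProjection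

open scoped ComplexConjugate

section Wirtinger

variable {f : ℂ → ℂ} {z a b : ℂ}

theorem wdz_eq_of_fderiv_apply (hf : ∀ v, fderiv ℝ f z v = a * v + b * conj v) :
    wdz f z = a := by
  rw [wdz, hf, hf, map_one, conj_I]
  linear_combination (b - a) / 2 * I_sq

theorem wdzbar_eq_of_fderiv_apply (hf : ∀ v, fderiv ℝ f z v = a * v + b * conj v) :
    wdzbar f z = b := by
  rw [wdzbar, hf, hf, map_one, conj_I]
  linear_combination (a - b) / 2 * I_sq

end Wirtinger

section Complex

variable {z : ℂ}

theorem div_ofReal_norm_eq_inv_norm_smul :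
    (fun w : ℂ => w / (‖w‖ : ℂ)) = fun w => ‖w‖⁻¹ • w := by
  funext w
  rw [Complex.real_smul, div_eq_inv_mul, ofReal_inv]

theorem fderiv_div_ofReal_norm_apply (hz : z ≠ 0) (v : ℂ) :
    fderiv ℝ (fun w : ℂ => w / (‖w‖ : ℂ)) z v =
      (2 * ‖z‖ : ℂ)⁻¹ * v + -z ^ 2 / (2 * ‖z‖ ^ 3) * conj v := by
  rw [div_ofReal_norm_eq_inv_norm_smul, (hasFDerivAt_inv_norm_smul hz).fderiv]
  have hnorm : (‖z‖ : ℂ) ≠ 0 := ofReal_ne_zero.mpr (norm_ne_zero_iff.mpr hz)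
  simp only [sub_apply, smul_apply, ContinuousLinearMap.smulRight_apply,
    ContinuousLinearMap.id_apply, innerSL_apply_apply, Complex.inner, Complex.real_smul,
    re_eq_add_conj, map_mul, conj_conj, ofReal_inv, ofReal_pow]
  field_simp
  linear_combination -v * mul_conj' z

theorem hopf_product_div_ofReal_norm (hz : z ≠ 0) :
    wdz (fun w : ℂ => w / (‖w‖ : ℂ)) z * conj (wdzbar (fun w : ℂ => w / (‖w‖ : ℂ)) z) =
      -1 / (4 * z ^ 2) := by
  rw [wdz_eq_of_fderiv_apply (fderiv_div_ofReal_norm_apply hz),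
    wdzbar_eq_of_fderiv_apply (fderiv_div_ofReal_norm_apply hz)]
  have hnorm : (‖z‖ : ℂ) ≠ 0 := ofReal_ne_zero.mpr (norm_ne_zero_iff.mpr hz)
  simp only [map_div₀, map_neg, map_pow, map_mul, conj_ofReal, map_ofNat]
  field_simp
  linear_combination (-4 * z * conj z - 4 * (‖z‖ : ℂ) ^ 2) * mul_conj' z

end Complex

theorem stmt_18_general (r : ℝ) (hr0 : 0 < r)
    (A : Set ℂ) (hA : A = {z : ℂ | r < ‖z‖ ∧ ‖z‖ < 1})
    (h : ℂ → ℂ) (hdef : h = fun z => z / ((‖z‖ : ℝ) : ℂ)) :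
    ContDiffOn ℝ (⊤ : ℕ∞) h A ∧
    (∀ z ∈ A, wdz h z * (starRingEnd ℂ) (wdzbar h z) = -1 / (4 * z ^ 2)) ∧
    IsHopfHarmonic A h := by
  subst hA hdef
  have hne : ∀ z ∈ {z : ℂ | r < ‖z‖ ∧ ‖z‖ < 1}, z ≠ 0 := fun z hz =>
    norm_pos_iff.mp (hr0.trans hz.1)
  have hsmooth : ContDiffOn ℝ (⊤ : ℕ∞) (fun z : ℂ => z / (‖z‖ : ℂ))
      {z : ℂ | r < ‖z‖ ∧ ‖z‖ < 1} := by
    rw [div_ofReal_norm_eq_inv_norm_smul]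
    exact fun z hz => (contDiffAt_inv_norm_smul (hne z hz)).contDiffWithinAt
  have hhopf := fun z hz => hopf_product_div_ofReal_norm (hne z hz)
  refine ⟨hsmooth, hhopf, hsmooth.of_le (by exact_mod_cast le_top), ?_⟩
  refine DifferentiableOn.congr ?_ hhopf
  exact (differentiableOn_const _).div (by fun_prop) fun z hz => by simp [hne z hz]

/-- On the annulus `A = {r < |z| < 1}`, the map `h(z) = z/|z|` is
smooth, its Hopf product equals `-1/(4z²)`, and hence `h` is Hopf harmonic on `A`. -/
theorem stmt_18 (r : ℝ) (hr0 : 0 < r) (hr1 : r < 1)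
    (A : Set ℂ) (hA : A = {z : ℂ | r < ‖z‖ ∧ ‖z‖ < 1})
    (h : ℂ → ℂ) (hdef : h = fun z => z / ((‖z‖ : ℝ) : ℂ)) :
    ContDiffOn ℝ (⊤ : ℕ∞) h A ∧
    (∀ z ∈ A, wdz h z * (starRingEnd ℂ) (wdzbar h z) = -1 / (4 * z ^ 2)) ∧
    IsHopfHarmonic A h :=
  stmt_18_general r hr0 A hA h hdef
end
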